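/- Let d ≥ 1 and p ≥ 1, and let G₁, G₂, G₃ be finitely supported probability measures on ℝ^d × S_d^{++}(ℝ). Then SMix-W_p(G₁,G₂) ≤ SMix-W_p(G₁,G₃) + SMix-W_p(G₃,G₂), where SMix-W_p denotes the p-th root of SMix-W_p^p. Moreover SMix-W_p is nonnegative and symmetric in its two arguments. -/

import Mathlib

open MeasureTheory ProbabilityTheory Matrix ENNReal
open scoped RealInnerProductSpace

noncomputable section

namespace PaperSOT

/-- `ℝ^d` with the Euclidean norm. -/
abbrev E (d : ℕ) := EuclideanSpace ℝ (Fin d)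

/-- real `d × d` matrices. -/
abbrev Mat (d : ℕ) := Matrix (Fin d) (Fin d) ℝ

instance (d : ℕ) : MeasurableSpace (Mat d) :=
  (inferInstance : MeasurableSpace (Fin d → Fin d → ℝ))

/-- squared Frobenius norm `‖A‖_F² = Tr(Aᵀ A)`. -/
def frobSq {d : ℕ} (A : Mat d) : ℝ := (Aᵀ * A).trace

/-- Frobenius norm `‖A‖_F = sqrt (Tr (Aᵀ A))`. -/
def frobNorm {d : ℕ} (A : Mat d) : ℝ := Real.sqrt (frobSq A)

/-- the (unique, when it exists) symmetric logarithm of a matrix: for a symmetric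
positive definite `Σ` this is the unique symmetric `S` with `exp S = Σ`. -/
def symLog {d : ℕ} (M : Mat d) : Mat d := by
  classical exact if h : ∃ S : Mat d, S.IsSymm ∧ NormedSpace.exp S = M then h.choose else 0

/-- `π` is a coupling of `μ` and `ν`: its marginals are `μ` and `ν`. -/
def IsCoupling {X Y : Type*} [MeasurableSpace X] [MeasurableSpace Y]
    (π : Measure (X × Y)) (μ : Measure X) (ν : Measure Y) : Prop :=
  π.map Prod.fst = μ ∧ π.map Prod.snd = ν

/-- the Wasserstein-`p` cost `W_p^p` between two measures on `ℝ`: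
the infimum over couplings of `∫ |x-y|^p dπ`. -/
def Wp (p : ℝ) (ν₁ ν₂ : Measure ℝ) : ℝ≥0∞ :=
  ⨅ (π : Measure (ℝ × ℝ)) (_ : IsCoupling π ν₁ ν₂),
    ∫⁻ z, ENNReal.ofReal (|z.1 - z.2| ^ p) ∂π

/-- the standard Gaussian measure on `ℝ^d`. -/
def stdGaussianE (d : ℕ) : Measure (E d) :=
  (Measure.pi fun _ : Fin d => gaussianReal 0 1).map
    (MeasurableEquiv.toLp 2 (Fin d → ℝ))

/-- the uniform probability distribution on the unit sphere of `ℝ^d`,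
realized as the law of a normalized standard Gaussian vector. -/
def unifSphere (d : ℕ) : Measure (E d) :=
  (stdGaussianE d).map (fun x => ‖x‖⁻¹ • x)

/-- the standard Gaussian measure on `d × d` matrices (i.i.d. standard normal entries). -/
def stdGaussianMat (d : ℕ) : Measure (Mat d) :=
  (Measure.pi fun _ : Fin d => Measure.pi fun _ : Fin d => gaussianReal 0 1 :
    Measure (Fin d → Fin d → ℝ)).map (fun g => (Matrix.of g : Mat d))

/-- the uniform probability distribution on the unit Frobenius sphere of the space of
real symmetric `d × d` matrices, realized as the law of a Frobenius-normalized isotropic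
Gaussian symmetric matrix. -/
def unifSymSphere (d : ℕ) : Measure (Mat d) :=
  (stdGaussianMat d).map (fun g =>
    (frobNorm ((2:ℝ)⁻¹ • (g + gᵀ)))⁻¹ • ((2:ℝ)⁻¹ • (g + gᵀ)))

/-- the space `S_d^{++}(ℝ)` of real symmetric positive definite `d × d` matrices. -/
abbrev PDMat (d : ℕ) := {M : Mat d // M.PosDef}

/-- the quadratic form `vᵀ M v`. -/
def quad {d : ℕ} (v : E d) (M : Mat d) : ℝ := ∑ i, ∑ j, v i * M i j * v j

/-- the generalized geodesic projection
`P_{V_w}(μ, Σ) = w₁ ⟨μ, v⟩ + w₂ Tr(A log Σ)` on `ℝ^d × S_d^{++}(ℝ)`. -/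
def projMix {d : ℕ} (w : E 2) (v : E d) (A : Mat d) (x : E d × PDMat d) : ℝ :=
  w 0 * ⟪x.1, v⟫ + w 1 * (A * symLog x.2.1).trace

/-- the mixed sliced Wasserstein distance (raised to the power `p`),
`Mix-SW_p^p(G₁,G₂) = ∫ W_p^p(P_{V_w}♯G₁, P_{V_w}♯G₂) dσ(w,v,A)`, where `σ` is the product
of the uniform distributions on the unit circle, the unit sphere of `ℝ^d` and the unit
Frobenius sphere of symmetric `d × d` matrices. -/
def MixSW (d : ℕ) (p : ℝ) (G₁ G₂ : Measure (E d × PDMat d)) : ℝ≥0∞ :=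
  ∫⁻ w, ∫⁻ v, ∫⁻ A,
      Wp p (G₁.map (projMix w v A)) (G₂.map (projMix w v A))
    ∂(unifSymSphere d) ∂(unifSphere d) ∂(unifSphere 2)

/-- the log-Euclidean distance
`d((μ₁,Σ₁),(μ₂,Σ₂)) = sqrt(‖μ₁-μ₂‖² + ‖log Σ₁ - log Σ₂‖_F²)` on `ℝ^d × S_d^{++}(ℝ)`. -/
def dLE {d : ℕ} (x y : E d × PDMat d) : ℝ :=
  Real.sqrt (‖x.1 - y.1‖ ^ 2 + frobSq (symLog x.2.1 - symLog y.2.1))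

/-- the projection `P_{v,w}(μ,Σ) = w₁ ⟨v,μ⟩ + w₂ log √(vᵀ Σ v)` used by the sliced
mixture Wasserstein distance. -/
def projSMix {d : ℕ} (w : E 2) (v : E d) (x : E d × PDMat d) : ℝ :=
  w 0 * ⟪v, x.1⟫ + w 1 * Real.log (Real.sqrt (quad v x.2.1))

/-- the sliced mixture Wasserstein distance (raised to the power `p`),
`SMix-W_p^p(G₁,G₂) = ∫ W_p^p(P_{v,w}♯G₁, P_{v,w}♯G₂) dσ(w,v)`, where `σ` is the product of
the uniform distributions on the unit circle and on the unit sphere of `ℝ^d`. -/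
def SMixW (d : ℕ) (p : ℝ) (G₁ G₂ : Measure (E d × PDMat d)) : ℝ≥0∞ :=
  ∫⁻ w, ∫⁻ v,
      Wp p (G₁.map (projSMix w v)) (G₂.map (projSMix w v))
    ∂(unifSphere d) ∂(unifSphere 2)

/-- the symmetrized log-Rayleigh quantity
`L(Σ₁,Σ₂) = sup_{‖u‖=1} |log (uᵀΣ₁u / uᵀΣ₂u)|`. -/
def logRayleigh {d : ℕ} (S₁ S₂ : Mat d) : ℝ :=
  sSup {r : ℝ | ∃ u : E d, ‖u‖ = 1 ∧ r = |Real.log (quad u S₁ / quad u S₂)|}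

/-- the distance `d_S((μ₁,Σ₁),(μ₂,Σ₂)) = sqrt(‖μ₁-μ₂‖² + (1/4) L(Σ₁,Σ₂)²)`. -/
def dS {d : ℕ} (x y : E d × PDMat d) : ℝ :=
  Real.sqrt (‖x.1 - y.1‖ ^ 2 + (1/4) * (logRayleigh x.2.1 y.2.1) ^ 2)

/-- a measure is finitely supported if some finite set has full measure. -/
def FinSupp {X : Type*} [MeasurableSpace X] (G : Measure X) : Prop :=
  ∃ s : Finset X, G (↑s : Set X)ᶜ = 0

/-- the old Mathlib `Matrix.PosSemidef.sqrt` (removed upstream), spelled out. -/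
def psdSqrt {d : ℕ} {S : Mat d} (hS : S.PosSemidef) : Mat d :=
  (hS.1.eigenvectorUnitary : Mat d) * diagonal (fun i => Real.sqrt (hS.1.eigenvalues i)) *
    (star hS.1.eigenvectorUnitary : Mat d)

/-- the Gaussian measure `N(m, Σ)` on `ℝ^d` (with `Σ` positive semidefinite), realized as
the law of `m + Σ^{1/2} Z` for a standard Gaussian vector `Z`. -/
def gaussianE {d : ℕ} (m : E d) {S : Mat d} (hS : S.PosSemidef) : Measure (E d) :=
  (stdGaussianE d).map (fun x =>
    m + (MeasurableEquiv.toLp 2 (Fin d → ℝ)) ((psdSqrt hS).mulVec (fun i => x i)))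

/-! ### Auxiliary material for the proof of Statement 15 -/

section MatrixLevel

variable {ι κ ν' : Type*} [Fintype ι] [Fintype κ] [Fintype ν']

/-- matrix-level couplings of two weight vectors. -/
def cpl (a : ι → ℝ≥0∞) (b : κ → ℝ≥0∞) : Set (ι → κ → ℝ≥0∞) :=
  {c | (∀ x, ∑ y, c x y = a x) ∧ (∀ y, ∑ x, c x y = b y)}

/-- matrix-level transport cost. -/
def mcost (M : ι → κ → ℝ≥0∞) (c : ι → κ → ℝ≥0∞) : ℝ≥0∞ := ∑ x, ∑ y, c x y * M x y

/-- matrix-level optimal transport cost. -/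
def mW (a : ι → ℝ≥0∞) (b : κ → ℝ≥0∞) (M : ι → κ → ℝ≥0∞) : ℝ≥0∞ :=
  ⨅ c : cpl a b, mcost M (c : ι → κ → ℝ≥0∞)

lemma mW_le {a : ι → ℝ≥0∞} {b : κ → ℝ≥0∞} (M : ι → κ → ℝ≥0∞) {c : ι → κ → ℝ≥0∞}
    (hc : c ∈ cpl a b) : mW a b M ≤ mcost M c :=
  iInf_le (fun c : cpl a b => mcost M (c : ι → κ → ℝ≥0∞)) ⟨c, hc⟩

lemma mW_swap_le (a : ι → ℝ≥0∞) (b : κ → ℝ≥0∞) (M : ι → κ → ℝ≥0∞) :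
    mW b a (fun y x => M x y) ≤ mW a b M := by
  refine le_iInf fun c => ?_
  have hc : (fun y x => (c : ι → κ → ℝ≥0∞) x y) ∈ cpl b a := ⟨c.2.2, c.2.1⟩
  refine le_trans (mW_le _ hc) ?_
  rw [mcost, mcost, Finset.sum_comm]

lemma mW_symm (a : ι → ℝ≥0∞) (b : κ → ℝ≥0∞) (M : ι → κ → ℝ≥0∞) :
    mW a b M = mW b a (fun y x => M x y) :=
  le_antisymm (mW_swap_le b a fun y x => M x y) (mW_swap_le a b M)

lemma iInf_rpow_of_pos {α : Sort*} (f : α → ℝ≥0∞) {r : ℝ} (hr : 0 < r) :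
    (⨅ i, f i) ^ r = ⨅ i, f i ^ r := by
  cases isEmpty_or_nonempty α
  · simp [iInf_of_empty, ENNReal.top_rpow_of_pos hr]
  refine le_antisymm (le_iInf fun i => ENNReal.rpow_le_rpow (iInf_le f i) hr.le) ?_
  have h2 : ∀ i, (f i ^ r) ^ (1 / r) = f i := fun i => by
    rw [← ENNReal.rpow_mul, mul_one_div_cancel hr.ne', ENNReal.rpow_one]
  have h1 : (⨅ i, f i ^ r) ^ (1 / r) ≤ ⨅ i, f i := by
    refine le_iInf fun i => ?_
    rw [← h2 i]
    exact ENNReal.rpow_le_rpow (iInf_le _ i) (by positivity)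
  calc ⨅ i, f i ^ r = ((⨅ i, f i ^ r) ^ (1 / r)) ^ r := by
        rw [← ENNReal.rpow_mul, one_div_mul_cancel hr.ne', ENNReal.rpow_one]
    _ ≤ (⨅ i, f i) ^ r := ENNReal.rpow_le_rpow h1 hr.le

/-- the cost matrix of two point configurations. -/
def mk' (p : ℝ) (φ : ι → ℝ) (ψ : κ → ℝ) : ι → κ → ℝ≥0∞ :=
  fun x y => ENNReal.ofReal (|φ x - ψ y| ^ p)

omit [Fintype ι] [Fintype κ] in
lemma mk'_eq (p : ℝ) (hp : 0 ≤ p) (φ : ι → ℝ) (ψ : κ → ℝ) (x : ι) (y : κ) :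
    mk' p φ ψ x y = ENNReal.ofReal |φ x - ψ y| ^ p := by
  rw [mk', ← ENNReal.ofReal_rpow_of_nonneg (abs_nonneg _) hp]

lemma mW_triangle_aux {p : ℝ} (hp : 1 ≤ p) (a : ι → ℝ≥0∞) (b₂ : κ → ℝ≥0∞) (b₃ : ν' → ℝ≥0∞)
    (hb₃ : ∀ y, b₃ y ≠ ∞) (φ : ι → ℝ) (χ : κ → ℝ) (ψ : ν' → ℝ)
    {c₁ : ι → ν' → ℝ≥0∞} (hc₁ : c₁ ∈ cpl a b₃) {c₂ : ν' → κ → ℝ≥0∞} (hc₂ : c₂ ∈ cpl b₃ b₂) :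
    mW a b₂ (mk' p φ χ) ^ (1 / p) ≤
      mcost (mk' p φ ψ) c₁ ^ (1 / p) + mcost (mk' p ψ χ) c₂ ^ (1 / p) := by
  have hp0 : (0 : ℝ) < p := lt_of_lt_of_le one_pos hp
  have fact1 : ∀ x y, b₃ y = 0 → c₁ x y = 0 := by
    intro x y h
    have : c₁ x y ≤ ∑ x', c₁ x' y :=
      Finset.single_le_sum (f := fun x' => c₁ x' y) (fun _ _ => zero_le) (Finset.mem_univ x)
    rw [hc₁.2 y, h] at this
    exact le_antisymm this (zero_le)
  have fact2 : ∀ y z, b₃ y = 0 → c₂ y z = 0 := by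
    intro y z h
    have : c₂ y z ≤ ∑ z', c₂ y z' :=
      Finset.single_le_sum (f := fun z' => c₂ y z') (fun _ _ => zero_le) (Finset.mem_univ z)
    rw [hc₂.1 y, h] at this
    exact le_antisymm this (zero_le)
  set glue : ι → κ → ℝ≥0∞ := fun x z => ∑ y, (b₃ y)⁻¹ * c₁ x y * c₂ y z with hglue
  have hgluecpl : glue ∈ cpl a b₂ := by
    constructor
    · intro x
      rw [← hc₁.1 x, Finset.sum_comm]
      refine Finset.sum_congr rfl fun y _ => ?_
      rw [← Finset.mul_sum, hc₂.1 y]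
      by_cases h : b₃ y = 0
      · simp [h, fact1 x y h]
      · rw [mul_comm ((b₃ y)⁻¹) (c₁ x y), mul_assoc, ENNReal.inv_mul_cancel h (hb₃ y), mul_one]
    · intro z
      rw [← hc₂.2 z]
      rw [Finset.sum_comm]
      refine Finset.sum_congr rfl fun y _ => ?_
      have : ∀ x, (b₃ y)⁻¹ * c₁ x y * c₂ y z = (b₃ y)⁻¹ * c₂ y z * c₁ x y := fun x => by ring
      simp_rw [this]
      rw [← Finset.mul_sum, hc₁.2 y]
      by_cases h : b₃ y = 0
      · simp [h, fact2 y z h]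
      · rw [mul_comm ((b₃ y)⁻¹) (c₂ y z), mul_assoc, ENNReal.inv_mul_cancel h (hb₃ y), mul_one]
  set ω : ι × ν' × κ → ℝ≥0∞ := fun q => (b₃ q.2.1)⁻¹ * c₁ q.1 q.2.1 * c₂ q.2.1 q.2.2 with hω
  set u : ι × ν' × κ → ℝ≥0∞ := fun q => ENNReal.ofReal |φ q.1 - ψ q.2.1| with hu
  set v : ι × ν' × κ → ℝ≥0∞ := fun q => ENNReal.ofReal |ψ q.2.1 - χ q.2.2| with hv
  have step2 : mcost (mk' p φ χ) glue ≤ ∑ q : ι × ν' × κ, ω q * (u q + v q) ^ p := by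
    rw [mcost, Fintype.sum_prod_type]
    refine Finset.sum_le_sum fun x _ => ?_
    rw [Fintype.sum_prod_type]
    rw [Finset.sum_comm]
    refine Finset.sum_le_sum fun z _ => ?_
    rw [hglue, Finset.sum_mul]
    refine Finset.sum_le_sum fun y _ => ?_
    refine mul_le_mul_right ?_ _
    rw [mk'_eq p hp0.le]
    refine ENNReal.rpow_le_rpow ?_ hp0.le
    rw [hu, hv]
    calc ENNReal.ofReal |φ x - χ z| ≤ ENNReal.ofReal (|φ x - ψ y| + |ψ y - χ z|) :=
          ENNReal.ofReal_le_ofReal (abs_sub_le _ _ _)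
      _ = _ := ENNReal.ofReal_add (abs_nonneg _) (abs_nonneg _)
  have step3 : (∑ q : ι × ν' × κ, ω q * (u q + v q) ^ p) ^ (1 / p) ≤
      (∑ q : ι × ν' × κ, ω q * u q ^ p) ^ (1 / p) +
        (∑ q : ι × ν' × κ, ω q * v q ^ p) ^ (1 / p) := by
    have key : ∀ (h : ι × ν' × κ → ℝ≥0∞) q, ω q * h q ^ p = (ω q ^ (1/p) * h q) ^ p := by
      intro h q
      rw [ENNReal.mul_rpow_of_nonneg _ _ hp0.le, ← ENNReal.rpow_mul,
        one_div_mul_cancel hp0.ne', ENNReal.rpow_one]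
    have key2 : ∀ q, ω q * (u q + v q) ^ p = (ω q ^ (1/p) * u q + ω q ^ (1/p) * v q) ^ p := by
      intro q; rw [key (fun q => u q + v q) q, mul_add]
    simp_rw [key2, key u, key v]
    exact ENNReal.Lp_add_le Finset.univ _ _ hp
  have step4 : ∑ q : ι × ν' × κ, ω q * u q ^ p = mcost (mk' p φ ψ) c₁ := by
    rw [mcost, Fintype.sum_prod_type]
    refine Finset.sum_congr rfl fun x _ => ?_
    rw [Fintype.sum_prod_type]
    refine Finset.sum_congr rfl fun y _ => ?_
    have : ∀ z, ω (x, y, z) * u (x, y, z) ^ p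
        = (b₃ y)⁻¹ * (c₁ x y * ENNReal.ofReal |φ x - ψ y| ^ p) * c₂ y z := fun z => by
      simp only [hω, hu]; ring
    simp_rw [this]
    rw [← Finset.mul_sum, hc₂.1 y]
    by_cases h : b₃ y = 0
    · simp [h, fact1 x y h]
    · rw [mul_comm ((b₃ y)⁻¹) _, mul_assoc, ENNReal.inv_mul_cancel h (hb₃ y), mul_one,
        mk'_eq p hp0.le]
  have step5 : ∑ q : ι × ν' × κ, ω q * v q ^ p = mcost (mk' p ψ χ) c₂ := by
    have hR : mcost (mk' p ψ χ) c₂ = ∑ r : ν' × κ, c₂ r.1 r.2 * mk' p ψ χ r.1 r.2 := by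
      rw [mcost, Fintype.sum_prod_type]
    rw [hR, Fintype.sum_prod_type, Finset.sum_comm]
    refine Finset.sum_congr rfl fun r _ => ?_
    obtain ⟨y, z⟩ := r
    have : ∀ x, ω (x, y, z) * v (x, y, z) ^ p
        = (b₃ y)⁻¹ * (c₂ y z * ENNReal.ofReal |ψ y - χ z| ^ p) * c₁ x y := fun x => by
      simp only [hω, hv]; ring
    simp_rw [this]
    rw [← Finset.mul_sum, hc₁.2 y]
    by_cases h : b₃ y = 0
    · simp [h, fact2 y z h]
    · rw [mul_comm ((b₃ y)⁻¹) _, mul_assoc, ENNReal.inv_mul_cancel h (hb₃ y), mul_one,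
        mk'_eq p hp0.le]
  calc mW a b₂ (mk' p φ χ) ^ (1 / p)
      ≤ mcost (mk' p φ χ) glue ^ (1 / p) :=
        ENNReal.rpow_le_rpow (mW_le _ hgluecpl) (by positivity)
    _ ≤ (∑ q : ι × ν' × κ, ω q * (u q + v q) ^ p) ^ (1 / p) :=
        ENNReal.rpow_le_rpow step2 (by positivity)
    _ ≤ _ := by rw [← step4, ← step5]; exact step3

lemma mW_triangle {p : ℝ} (hp : 1 ≤ p) (a : ι → ℝ≥0∞) (b₂ : κ → ℝ≥0∞) (b₃ : ν' → ℝ≥0∞)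
    (hb₃ : ∀ y, b₃ y ≠ ∞) (φ : ι → ℝ) (χ : κ → ℝ) (ψ : ν' → ℝ) :
    mW a b₂ (mk' p φ χ) ^ (1 / p) ≤
      mW a b₃ (mk' p φ ψ) ^ (1 / p) + mW b₃ b₂ (mk' p ψ χ) ^ (1 / p) := by
  have hr : (0 : ℝ) < 1 / p := by positivity
  conv_rhs => rw [mW, mW, iInf_rpow_of_pos _ hr, iInf_rpow_of_pos _ hr, ENNReal.iInf_add]
  refine le_iInf fun c₁ => ?_
  conv_rhs => rw [ENNReal.add_iInf]
  refine le_iInf fun c₂ => ?_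
  exact mW_triangle_aux hp a b₂ b₃ hb₃ φ χ ψ c₁.2 c₂.2

lemma mW_measurable' (a : ι → ℝ≥0∞) (b : κ → ℝ≥0∞) (ha : ∀ x, a x ≠ ∞) :
    Measurable fun M : ι → κ → ℝ≥0∞ => mW a b M := by
  apply measurable_of_Iio
  intro t
  have : (fun M : ι → κ → ℝ≥0∞ => mW a b M) ⁻¹' Set.Iio t
      = ⋃ c : cpl a b, {M : ι → κ → ℝ≥0∞ | mcost M (c : ι → κ → ℝ≥0∞) < t} := by
    ext M
    simp [mW, iInf_lt_iff, Set.mem_iUnion]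
  rw [this]
  refine IsOpen.measurableSet (isOpen_iUnion fun c => ?_)
  have hcont : Continuous fun M : ι → κ → ℝ≥0∞ => mcost M (c : ι → κ → ℝ≥0∞) := by
    refine continuous_finset_sum _ fun x _ => continuous_finset_sum _ fun y _ => ?_
    have hne : (c : ι → κ → ℝ≥0∞) x y ≠ ∞ := by
      refine ne_top_of_le_ne_top (ha x) ?_
      rw [← c.2.1 x]
      exact Finset.single_le_sum (f := fun y' => (c : ι → κ → ℝ≥0∞) x y') (fun _ _ => zero_le)
        (Finset.mem_univ y)
    exact (ENNReal.continuous_const_mul hne).comp ((continuous_apply y).comp (continuous_apply x))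
  exact hcont.isOpen_preimage _ isOpen_Iio

lemma mW_measurable {δ : Type*} [MeasurableSpace δ] (a : ι → ℝ≥0∞) (b : κ → ℝ≥0∞)
    (ha : ∀ x, a x ≠ ∞) {Mp : δ → ι → κ → ℝ≥0∞} (hM : ∀ x y, Measurable fun θ => Mp θ x y) :
    Measurable fun θ => mW a b (Mp θ) := by
  refine (mW_measurable' a b ha).comp ?_
  exact measurable_pi_lambda _ fun x => measurable_pi_lambda _ fun y => hM x y

end MatrixLevel

section MeasureLevel

open scoped Classical

variable {X : Type*} [MeasurableSpace X] [MeasurableSingletonClass X]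

lemma finrep (G : Measure X) {s : Finset X} (hs : G (↑s : Set X)ᶜ = 0)
    {A : Set X} (hA : MeasurableSet A) :
    G A = ∑ x ∈ s, if x ∈ A then G {x} else 0 := by
  have hsm : MeasurableSet (↑s : Set X) := s.measurableSet
  have h0 : G (A \ ↑s) = 0 :=
    measure_mono_null (fun x hx => hx.2) hs
  have h1 : G A = G (A ∩ ↑s) := by
    rw [← measure_inter_add_diff A hsm, h0, add_zero]
  have h2 : A ∩ ↑s = ⋃ x ∈ s, A ∩ {x} := by
    ext z
    simp only [Set.mem_inter_iff, Finset.mem_coe, Set.mem_iUnion, Set.mem_singleton_iff]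
    constructor
    · rintro ⟨hz, hzs⟩; exact ⟨z, hzs, hz, rfl⟩
    · rintro ⟨x, hxs, hz, rfl⟩; exact ⟨hz, hxs⟩
  have h3 : G (A ∩ ↑s) = ∑ x ∈ s, G (A ∩ {x}) := by
    rw [h2]
    refine measure_biUnion_finset ?_ fun x _ => hA.inter (measurableSet_singleton x)
    intro x _ y _ hxy
    simp only [Function.onFun]
    refine Set.disjoint_left.2 fun z hz hz' => hxy ?_
    rw [← hz.2, ← hz'.2]
  rw [h1, h3]
  refine Finset.sum_congr rfl fun x _ => ?_
  by_cases hx : x ∈ A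
  · rw [if_pos hx]
    congr 1
    exact Set.inter_eq_self_of_subset_right (by simpa using hx)
  · have he : A ∩ ({x} : Set X) = ∅ :=
      Set.eq_empty_of_forall_notMem fun z hz => hx (hz.2 ▸ hz.1)
    rw [if_neg hx, he, measure_empty]

lemma map_singleton_fiber (G : Measure X) {s : Finset X} (hs : G (↑s : Set X)ᶜ = 0)
    {f : X → ℝ} (hf : Measurable f) (u : ℝ) :
    (G.map f) {u} = ∑ x ∈ s.filter (fun x => f x = u), G {x} := by
  rw [Measure.map_apply hf (measurableSet_singleton u),
    finrep G hs (hf (measurableSet_singleton u)), Finset.sum_filter]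
  refine Finset.sum_congr rfl fun x _ => ?_
  congr 1

omit [MeasurableSpace X] [MeasurableSingletonClass X] in
/-- regrouping a sum along the fibers of `g`. -/
lemma helper1 (t : Finset X) (g : X → ℝ) (w : X → ℝ≥0∞) (T : ℝ → ℝ≥0∞) :
    ∑ y ∈ t, w y * T (g y)
      = ∑ v ∈ t.image g, (∑ y ∈ t.filter (fun y => g y = v), w y) * T v := by
  rw [← Finset.sum_fiberwise_of_maps_to (fun y hy => Finset.mem_image_of_mem g hy)
    (fun y => w y * T (g y))]
  refine Finset.sum_congr rfl fun v _ => ?_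
  rw [Finset.sum_mul]
  refine Finset.sum_congr rfl fun y hy => ?_
  rw [(Finset.mem_filter.1 hy).2]

lemma cost_measurable (p : ℝ) :
    Measurable fun z : ℝ × ℝ => ENNReal.ofReal (|z.1 - z.2| ^ p) :=
  (((measurable_fst.sub measurable_snd).abs.pow measurable_const)).ennreal_ofReal

lemma Wp_le_mcost {p : ℝ} (G G' : Measure X)
    {s t : Finset X} (hs : G (↑s : Set X)ᶜ = 0) (ht : G' (↑t : Set X)ᶜ = 0)
    {f g : X → ℝ} (hf : Measurable f) (hg : Measurable g)
    {c : ↥s → ↥t → ℝ≥0∞}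
    (hc : c ∈ cpl (fun x : ↥s => G {(x : X)}) (fun y : ↥t => G' {(y : X)})) :
    Wp p (G.map f) (G'.map g)
      ≤ mcost (fun (x : ↥s) (y : ↥t) => ENNReal.ofReal (|f ↑x - g ↑y| ^ p)) c := by
  set π : Measure (ℝ × ℝ) :=
    ∑ z : ↥s × ↥t, c z.1 z.2 • Measure.dirac (f (z.1 : X), g (z.2 : X)) with hπ
  have happly : ∀ {A : Set (ℝ × ℝ)}, MeasurableSet A →
      π A = ∑ x : ↥s, ∑ y : ↥t, c x y * (if (f (x : X), g (y : X)) ∈ A then 1 else 0) := by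
    intro A hA
    rw [hπ, Measure.finset_sum_apply, Fintype.sum_prod_type]
    refine Finset.sum_congr rfl fun x _ => Finset.sum_congr rfl fun y _ => ?_
    rw [Measure.smul_apply, Measure.dirac_apply' _ hA, smul_eq_mul, Set.indicator_apply]
    congr 1
  have hcpl : IsCoupling π (G.map f) (G'.map g) := by
    constructor
    · ext A hA
      rw [Measure.map_apply measurable_fst hA, Measure.map_apply hf hA,
        happly (measurable_fst hA), finrep G hs (hf hA),
        ← Finset.sum_coe_sort s (fun x => if x ∈ f ⁻¹' A then G {x} else 0)]
      refine Finset.sum_congr rfl fun x _ => ?_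
      by_cases hx : f (x : X) ∈ A
      · simp only [Set.mem_preimage, hx, if_true, mul_one]
        simpa using hc.1 x
      · simp [Set.mem_preimage, hx]
    · ext A hA
      rw [Measure.map_apply measurable_snd hA, Measure.map_apply hg hA,
        happly (measurable_snd hA), finrep G' ht (hg hA),
        ← Finset.sum_coe_sort t (fun y => if y ∈ g ⁻¹' A then G' {y} else 0),
        Finset.sum_comm]
      refine Finset.sum_congr rfl fun y _ => ?_
      by_cases hy : g (y : X) ∈ A
      · simp only [Set.mem_preimage, hy, if_true, mul_one]
        simpa using hc.2 y
      · simp [Set.mem_preimage, hy]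
  have hcost : ∫⁻ z, ENNReal.ofReal (|z.1 - z.2| ^ p) ∂π
      = mcost (fun (x : ↥s) (y : ↥t) => ENNReal.ofReal (|f ↑x - g ↑y| ^ p)) c := by
    rw [hπ, lintegral_finset_sum_measure, mcost, Fintype.sum_prod_type]
    refine Finset.sum_congr rfl fun x _ => Finset.sum_congr rfl fun y _ => ?_
    rw [lintegral_smul_measure, lintegral_dirac' _ (cost_measurable p)]
    exact smul_eq_mul _ _
  exact le_trans (iInf₂_le π hcpl) hcost.le

omit [MeasurableSpace X] [MeasurableSingletonClass X] in
lemma singleton_prod_subset_left (u v : ℝ) :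
    ({(u, v)} : Set (ℝ × ℝ)) ⊆ {u} ×ˢ (Set.univ : Set ℝ) := by
  intro z hz
  rw [Set.mem_singleton_iff] at hz
  subst hz
  exact ⟨rfl, trivial⟩

omit [MeasurableSpace X] [MeasurableSingletonClass X] in
lemma singleton_prod_subset_right (u v : ℝ) :
    ({(u, v)} : Set (ℝ × ℝ)) ⊆ (Set.univ : Set ℝ) ×ˢ {v} := by
  intro z hz
  rw [Set.mem_singleton_iff] at hz
  subst hz
  exact ⟨trivial, rfl⟩

lemma mW_le_Wp {p : ℝ} (G G' : Measure X) [IsProbabilityMeasure G] [IsProbabilityMeasure G']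
    {s t : Finset X} (hs : G (↑s : Set X)ᶜ = 0) (ht : G' (↑t : Set X)ᶜ = 0)
    {f g : X → ℝ} (hf : Measurable f) (hg : Measurable g) :
    mW (fun x : ↥s => G {(x : X)}) (fun y : ↥t => G' {(y : X)})
        (fun (x : ↥s) (y : ↥t) => ENNReal.ofReal (|f ↑x - g ↑y| ^ p))
      ≤ Wp p (G.map f) (G'.map g) := by
  refine le_iInf fun π => le_iInf fun hcpl => ?_
  haveI : IsProbabilityMeasure (G.map f) := Measure.isProbabilityMeasure_map hf.aemeasurable
  haveI : IsProbabilityMeasure (G'.map g) := Measure.isProbabilityMeasure_map hg.aemeasurable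
  -- marginal identities
  have hfst : ∀ u : ℝ, π ({u} ×ˢ (Set.univ : Set ℝ)) = (G.map f) {u} := by
    intro u
    rw [← hcpl.1, Measure.map_apply measurable_fst (measurableSet_singleton u)]
    congr 1
    ext z
    simp only [Set.mem_preimage, Set.mem_singleton_iff, Set.mem_prod, Set.mem_univ, and_true]
  have hsnd : ∀ v : ℝ, π ((Set.univ : Set ℝ) ×ˢ {v}) = (G'.map g) {v} := by
    intro v
    rw [← hcpl.2, Measure.map_apply measurable_snd (measurableSet_singleton v)]
    congr 1
    ext z
    simp only [Set.mem_preimage, Set.mem_singleton_iff, Set.mem_prod, Set.mem_univ, true_and]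
  -- vanishing of the mass outside the supports
  have hν₁F : (G.map f) ((↑(s.image f) : Set ℝ)ᶜ) = 0 := by
    rw [Measure.map_apply hf (s.image f).measurableSet.compl]
    refine measure_mono_null ?_ hs
    intro x hx hxs
    exact hx (Finset.mem_coe.2 (Finset.mem_image_of_mem f hxs))
  have hν₂G : (G'.map g) ((↑(t.image g) : Set ℝ)ᶜ) = 0 := by
    rw [Measure.map_apply hg (t.image g).measurableSet.compl]
    refine measure_mono_null ?_ ht
    intro x hx hxs
    exact hx (Finset.mem_coe.2 (Finset.mem_image_of_mem g hxs))
  have hFc : π ((↑(s.image f) : Set ℝ)ᶜ ×ˢ (Set.univ : Set ℝ)) = 0 := by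
    have he : (↑(s.image f) : Set ℝ)ᶜ ×ˢ (Set.univ : Set ℝ)
        = Prod.fst ⁻¹' (↑(s.image f) : Set ℝ)ᶜ := by
      ext z; simp [Set.mem_prod]
    rw [he, ← Measure.map_apply measurable_fst (s.image f).measurableSet.compl, hcpl.1]
    exact hν₁F
  have hGc : π ((Set.univ : Set ℝ) ×ˢ (↑(t.image g) : Set ℝ)ᶜ) = 0 := by
    have he : (Set.univ : Set ℝ) ×ˢ (↑(t.image g) : Set ℝ)ᶜ
        = Prod.snd ⁻¹' (↑(t.image g) : Set ℝ)ᶜ := by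
      ext z; simp [Set.mem_prod]
    rw [he, ← Measure.map_apply measurable_snd (t.image g).measurableSet.compl, hcpl.2]
    exact hν₂G
  -- vanishing singletons
  have hz1 : ∀ u v : ℝ, (G.map f) {u} = 0 → π {(u, v)} = 0 := fun u v h =>
    measure_mono_null (singleton_prod_subset_left u v) ((hfst u).trans h)
  have hz2 : ∀ u v : ℝ, (G'.map g) {v} = 0 → π {(u, v)} = 0 := fun u v h =>
    measure_mono_null (singleton_prod_subset_right u v) ((hsnd v).trans h)
  -- sum of singleton masses over fibers
  have subA : ∀ u : ℝ, ∑ v ∈ t.image g, π {(u, v)} = (G.map f) {u} := by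
    intro u
    have h1 : π ({u} ×ˢ (↑(t.image g) : Set ℝ)) = ∑ v ∈ t.image g, π {(u, v)} := by
      have hU : {u} ×ˢ (↑(t.image g) : Set ℝ) = ⋃ v ∈ t.image g, ({(u, v)} : Set (ℝ × ℝ)) := by
        ext z
        simp only [Set.mem_prod, Set.mem_singleton_iff, Set.mem_iUnion, Finset.mem_coe]
        constructor
        · rintro ⟨h1, h2⟩
          exact ⟨z.2, h2, by rw [← h1]⟩
        · rintro ⟨v, hv, rfl⟩
          exact ⟨rfl, hv⟩
      rw [hU]
      refine measure_biUnion_finset ?_ fun v _ => measurableSet_singleton _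
      intro v _ v' _ hvv'
      simp only [Function.onFun]
      refine Set.disjoint_left.2 fun z hz hz' => hvv' ?_
      rw [Set.mem_singleton_iff] at hz hz'
      rw [hz] at hz'
      exact congrArg Prod.snd hz'
    have h2 : π ({u} ×ˢ (↑(t.image g) : Set ℝ)) = π ({u} ×ˢ (Set.univ : Set ℝ)) := by
      refine le_antisymm (measure_mono (Set.prod_mono_right (Set.subset_univ _))) ?_
      have hcover : {u} ×ˢ (Set.univ : Set ℝ)
          ⊆ ({u} ×ˢ (↑(t.image g) : Set ℝ)) ∪ ((Set.univ : Set ℝ) ×ˢ (↑(t.image g) : Set ℝ)ᶜ) := by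
        intro z hz
        by_cases hz2 : z.2 ∈ (↑(t.image g) : Set ℝ)
        · exact Or.inl ⟨hz.1, hz2⟩
        · exact Or.inr ⟨trivial, hz2⟩
      calc π ({u} ×ˢ (Set.univ : Set ℝ))
          ≤ π (({u} ×ˢ (↑(t.image g) : Set ℝ)) ∪ ((Set.univ : Set ℝ) ×ˢ (↑(t.image g) : Set ℝ)ᶜ)) :=
            measure_mono hcover
        _ ≤ π ({u} ×ˢ (↑(t.image g) : Set ℝ)) + π ((Set.univ : Set ℝ) ×ˢ (↑(t.image g) : Set ℝ)ᶜ) :=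
            measure_union_le _ _
        _ = π ({u} ×ˢ (↑(t.image g) : Set ℝ)) := by rw [hGc, add_zero]
    rw [← h1, h2, hfst]
  have subB : ∀ v : ℝ, ∑ u ∈ s.image f, π {(u, v)} = (G'.map g) {v} := by
    intro v
    have h1 : π ((↑(s.image f) : Set ℝ) ×ˢ {v}) = ∑ u ∈ s.image f, π {(u, v)} := by
      have hU : (↑(s.image f) : Set ℝ) ×ˢ {v} = ⋃ u ∈ s.image f, ({(u, v)} : Set (ℝ × ℝ)) := by
        ext z
        simp only [Set.mem_prod, Set.mem_singleton_iff, Set.mem_iUnion, Finset.mem_coe]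
        constructor
        · rintro ⟨h1, h2⟩
          exact ⟨z.1, h1, by rw [← h2]⟩
        · rintro ⟨u, hu, rfl⟩
          exact ⟨hu, rfl⟩
      rw [hU]
      refine measure_biUnion_finset ?_ fun u _ => measurableSet_singleton _
      intro u _ u' _ huu'
      simp only [Function.onFun]
      refine Set.disjoint_left.2 fun z hz hz' => huu' ?_
      rw [Set.mem_singleton_iff] at hz hz'
      rw [hz] at hz'
      exact congrArg Prod.fst hz'
    have h2 : π ((↑(s.image f) : Set ℝ) ×ˢ {v}) = π ((Set.univ : Set ℝ) ×ˢ {v}) := by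
      refine le_antisymm (measure_mono (Set.prod_mono_left (Set.subset_univ _))) ?_
      have hcover : (Set.univ : Set ℝ) ×ˢ ({v} : Set ℝ)
          ⊆ ((↑(s.image f) : Set ℝ) ×ˢ {v}) ∪ ((↑(s.image f) : Set ℝ)ᶜ ×ˢ (Set.univ : Set ℝ)) := by
        intro z hz
        by_cases hz1 : z.1 ∈ (↑(s.image f) : Set ℝ)
        · exact Or.inl ⟨hz1, hz.2⟩
        · exact Or.inr ⟨hz1, trivial⟩
      calc π ((Set.univ : Set ℝ) ×ˢ {v})
          ≤ π (((↑(s.image f) : Set ℝ) ×ˢ {v}) ∪ ((↑(s.image f) : Set ℝ)ᶜ ×ˢ (Set.univ : Set ℝ))) :=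
            measure_mono hcover
        _ ≤ π ((↑(s.image f) : Set ℝ) ×ˢ {v}) + π ((↑(s.image f) : Set ℝ)ᶜ ×ˢ (Set.univ : Set ℝ)) :=
            measure_union_le _ _
        _ = π ((↑(s.image f) : Set ℝ) ×ˢ {v}) := by rw [hFc, add_zero]
    rw [← h1, h2, hsnd]
  -- the transport matrix induced by the coupling π
  have haν : ∀ x : ↥s, G {(x : X)} ≤ (G.map f) {f ↑x} := by
    intro x
    rw [map_singleton_fiber G hs hf]
    exact Finset.single_le_sum (f := fun x' => G {x'}) (fun _ _ => zero_le)
      (Finset.mem_filter.2 ⟨x.2, rfl⟩)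
  have hbν : ∀ y : ↥t, G' {(y : X)} ≤ (G'.map g) {g ↑y} := by
    intro y
    rw [map_singleton_fiber G' ht hg]
    exact Finset.single_le_sum (f := fun y' => G' {y'}) (fun _ _ => zero_le)
      (Finset.mem_filter.2 ⟨y.2, rfl⟩)
  set c : ↥s → ↥t → ℝ≥0∞ := fun x y =>
    G {(x : X)} * (((G.map f) {f ↑x})⁻¹ *
      (G' {(y : X)} * (((G'.map g) {g ↑y})⁻¹ * π {(f ↑x, g ↑y)}))) with hcdef
  have hrow : ∀ x : ↥s, ∑ y : ↥t, c x y = G {(x : X)} := by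
    intro x
    have e1 : ∑ y : ↥t, c x y
        = G {(x : X)} * (((G.map f) {f ↑x})⁻¹ *
            ∑ y ∈ t, G' {y} * (((G'.map g) {g y})⁻¹ * π {(f ↑x, g y)})) := by
      rw [← Finset.sum_coe_sort t (fun y => G' {y} * (((G'.map g) {g y})⁻¹ * π {(f ↑x, g y)})),
        Finset.mul_sum, Finset.mul_sum]
    rw [e1, helper1 t g (fun y => G' {y}) (fun v => ((G'.map g) {v})⁻¹ * π {(f ↑x, v)})]
    have e2 : ∑ v ∈ t.image g,
        (∑ y ∈ t.filter (fun y => g y = v), G' {y}) * (((G'.map g) {v})⁻¹ * π {(f ↑x, v)})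
        = (G.map f) {f ↑x} := by
      rw [← subA (f ↑x)]
      refine Finset.sum_congr rfl fun v _ => ?_
      rw [← map_singleton_fiber G' ht hg v]
      by_cases h0 : (G'.map g) {v} = 0
      · rw [h0, hz2 (f ↑x) v h0]
        simp
      · rw [← mul_assoc, ENNReal.mul_inv_cancel h0 (measure_ne_top _ _), one_mul]
    rw [e2]
    by_cases h0 : (G.map f) {f ↑x} = 0
    · have hx0 : G {(x : X)} = 0 := le_antisymm (h0 ▸ haν x) (zero_le)
      rw [hx0]
      simp
    · rw [ENNReal.inv_mul_cancel h0 (measure_ne_top _ _), mul_one]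
  have hcol : ∀ y : ↥t, ∑ x : ↥s, c x y = G' {(y : X)} := by
    intro y
    have erw : ∀ x : ↥s, c x y
        = G' {(y : X)} * (((G'.map g) {g ↑y})⁻¹ *
            (G {(x : X)} * (((G.map f) {f ↑x})⁻¹ * π {(f ↑x, g ↑y)}))) := by
      intro x
      rw [hcdef]
      ring
    simp_rw [erw]
    have e1 : ∑ x : ↥s, G' {(y : X)} * (((G'.map g) {g ↑y})⁻¹ *
            (G {(x : X)} * (((G.map f) {f ↑x})⁻¹ * π {(f ↑x, g ↑y)})))
        = G' {(y : X)} * (((G'.map g) {g ↑y})⁻¹ *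
            ∑ x ∈ s, G {x} * (((G.map f) {f x})⁻¹ * π {(f x, g ↑y)})) := by
      rw [← Finset.sum_coe_sort s (fun x => G {x} * (((G.map f) {f x})⁻¹ * π {(f x, g ↑y)})),
        Finset.mul_sum, Finset.mul_sum]
    rw [e1, helper1 s f (fun x => G {x}) (fun u => ((G.map f) {u})⁻¹ * π {(u, g ↑y)})]
    have e2 : ∑ u ∈ s.image f,
        (∑ x ∈ s.filter (fun x => f x = u), G {x}) * (((G.map f) {u})⁻¹ * π {(u, g ↑y)})
        = (G'.map g) {g ↑y} := by
      rw [← subB (g ↑y)]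
      refine Finset.sum_congr rfl fun u _ => ?_
      rw [← map_singleton_fiber G hs hf u]
      by_cases h0 : (G.map f) {u} = 0
      · rw [h0, hz1 u (g ↑y) h0]
        simp
      · rw [← mul_assoc, ENNReal.mul_inv_cancel h0 (measure_ne_top _ _), one_mul]
    rw [e2]
    by_cases h0 : (G'.map g) {g ↑y} = 0
    · have hy0 : G' {(y : X)} = 0 := le_antisymm (h0 ▸ hbν y) (zero_le)
      rw [hy0]
      simp
    · rw [ENNReal.inv_mul_cancel h0 (measure_ne_top _ _), mul_one]
  have hc : c ∈ cpl (fun x : ↥s => G {(x : X)}) (fun y : ↥t => G' {(y : X)}) := ⟨hrow, hcol⟩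
  -- the cost of the coupling equals the matrix cost
  have hcost : mcost (fun (x : ↥s) (y : ↥t) => ENNReal.ofReal (|f ↑x - g ↑y| ^ p)) c
      = ∫⁻ z, ENNReal.ofReal (|z.1 - z.2| ^ p) ∂π := by
    -- right hand side as a finite sum
    have hms : MeasurableSet (↑((s.image f) ×ˢ (t.image g)) : Set (ℝ × ℝ)) :=
      Finset.measurableSet _
    have hcompl : π ((↑((s.image f) ×ˢ (t.image g)) : Set (ℝ × ℝ)))ᶜ = 0 := by
      have hsubs : (↑((s.image f) ×ˢ (t.image g)) : Set (ℝ × ℝ))ᶜ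
          ⊆ ((↑(s.image f) : Set ℝ)ᶜ ×ˢ (Set.univ : Set ℝ))
            ∪ ((Set.univ : Set ℝ) ×ˢ (↑(t.image g) : Set ℝ)ᶜ) := by
        intro z hz
        rw [Set.mem_compl_iff, Finset.coe_product, Set.mem_prod] at hz
        push_neg at hz
        by_cases h1 : z.1 ∈ (↑(s.image f) : Set ℝ)
        · exact Or.inr ⟨trivial, hz h1⟩
        · exact Or.inl ⟨h1, trivial⟩
      refine measure_mono_null hsubs ?_
      refine le_antisymm (le_trans (measure_union_le _ _) ?_) (zero_le)
      rw [hFc, hGc, add_zero]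
    have hrhs : ∫⁻ z, ENNReal.ofReal (|z.1 - z.2| ^ p) ∂π
        = ∑ w ∈ (s.image f) ×ˢ (t.image g), ENNReal.ofReal (|w.1 - w.2| ^ p) * π {w} := by
      rw [← lintegral_add_compl (fun z : ℝ × ℝ => ENNReal.ofReal (|z.1 - z.2| ^ p)) hms,
        setLIntegral_measure_zero _ _ hcompl, add_zero,
        lintegral_finset ((s.image f) ×ˢ (t.image g)) (fun z => ENNReal.ofReal (|z.1 - z.2| ^ p))]
    rw [hrhs, Finset.sum_product, mcost]
    -- now compute the matrix cost by double fiber decomposition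
    have inner1 : ∀ x : ↥s, ∑ y : ↥t,
        c x y * ENNReal.ofReal (|f ↑x - g ↑y| ^ p)
        = G {(x : X)} * (((G.map f) {f ↑x})⁻¹ *
            ∑ v ∈ t.image g, π {(f ↑x, v)} * ENNReal.ofReal (|f ↑x - v| ^ p)) := by
      intro x
      have erw : ∀ y : ↥t, c x y * ENNReal.ofReal (|f ↑x - g ↑y| ^ p)
          = G {(x : X)} * (((G.map f) {f ↑x})⁻¹ *
              (G' {(y : X)} * (((G'.map g) {g ↑y})⁻¹ *
                (π {(f ↑x, g ↑y)} * ENNReal.ofReal (|f ↑x - g ↑y| ^ p))))) := by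
        intro y
        rw [hcdef]
        ring
      simp_rw [erw]
      have e1 : ∑ y : ↥t, G {(x : X)} * (((G.map f) {f ↑x})⁻¹ *
              (G' {(y : X)} * (((G'.map g) {g ↑y})⁻¹ *
                (π {(f ↑x, g ↑y)} * ENNReal.ofReal (|f ↑x - g ↑y| ^ p)))))
          = G {(x : X)} * (((G.map f) {f ↑x})⁻¹ *
              ∑ y ∈ t, G' {y} * (((G'.map g) {g y})⁻¹ *
                (π {(f ↑x, g y)} * ENNReal.ofReal (|f ↑x - g y| ^ p)))) := by
        rw [← Finset.sum_coe_sort t (fun y => G' {y} * (((G'.map g) {g y})⁻¹ *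
          (π {(f ↑x, g y)} * ENNReal.ofReal (|f ↑x - g y| ^ p)))),
          Finset.mul_sum, Finset.mul_sum]
      rw [e1, helper1 t g (fun y => G' {y})
        (fun v => ((G'.map g) {v})⁻¹ * (π {(f ↑x, v)} * ENNReal.ofReal (|f ↑x - v| ^ p)))]
      congr 2
      refine Finset.sum_congr rfl fun v _ => ?_
      rw [← map_singleton_fiber G' ht hg v]
      by_cases h0 : (G'.map g) {v} = 0
      · rw [h0, hz2 (f ↑x) v h0]
        simp
      · rw [← mul_assoc, ENNReal.mul_inv_cancel h0 (measure_ne_top _ _), one_mul]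
    have e2 : ∑ x : ↥s, ∑ y : ↥t, c x y * ENNReal.ofReal (|f ↑x - g ↑y| ^ p)
        = ∑ x ∈ s, G {x} * (((G.map f) {f x})⁻¹ *
            ∑ v ∈ t.image g, π {(f x, v)} * ENNReal.ofReal (|f x - v| ^ p)) := by
      simp_rw [inner1]
      rw [Finset.sum_coe_sort s (fun x => G {x} * (((G.map f) {f x})⁻¹ *
        ∑ v ∈ t.image g, π {(f x, v)} * ENNReal.ofReal (|f x - v| ^ p)))]
    rw [e2, helper1 s f (fun x => G {x})
      (fun u => ((G.map f) {u})⁻¹ * ∑ v ∈ t.image g, π {(u, v)} * ENNReal.ofReal (|u - v| ^ p))]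
    refine Finset.sum_congr rfl fun u _ => ?_
    rw [← map_singleton_fiber G hs hf u]
    by_cases h0 : (G.map f) {u} = 0
    · rw [h0, zero_mul]
      exact (Finset.sum_eq_zero fun v _ => by rw [hz1 u v h0, mul_zero]).symm
    · rw [← mul_assoc, ENNReal.mul_inv_cancel h0 (measure_ne_top _ _), one_mul]
      refine Finset.sum_congr rfl fun v _ => mul_comm _ _
  exact le_trans (mW_le _ hc) hcost.le

lemma Wp_eq_mW {p : ℝ} (G G' : Measure X) [IsProbabilityMeasure G] [IsProbabilityMeasure G']
    {s t : Finset X} (hs : G (↑s : Set X)ᶜ = 0) (ht : G' (↑t : Set X)ᶜ = 0)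
    {f g : X → ℝ} (hf : Measurable f) (hg : Measurable g) :
    Wp p (G.map f) (G'.map g)
      = mW (fun x : ↥s => G {(x : X)}) (fun y : ↥t => G' {(y : X)})
          (mk' p (fun x : ↥s => f ↑x) (fun y : ↥t => g ↑y)) :=
  le_antisymm (le_iInf fun c => Wp_le_mcost G G' hs ht hf hg c.2)
    (mW_le_Wp G G' hs ht hf hg)

end MeasureLevel

section Instances

instance (d : ℕ) : MeasurableSingletonClass (Mat d) := by
  constructor
  intro M
  have : ({M} : Set (Mat d)) = ⋂ i, ⋂ j, (fun N : Mat d => N i j) ⁻¹' {M i j} := by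
    ext N
    simp only [Set.mem_singleton_iff, Set.mem_iInter, Set.mem_preimage]
    constructor
    · rintro rfl; intro i j; rfl
    · intro h
      ext i j
      exact h i j
  rw [this]
  exact MeasurableSet.iInter fun i => MeasurableSet.iInter fun j =>
    ((measurable_pi_apply j).comp (measurable_pi_apply i)) (measurableSet_singleton _)

instance (d : ℕ) : MeasurableSingletonClass (PDMat d) := by
  constructor
  intro M
  have : ({M} : Set (PDMat d)) = Subtype.val ⁻¹' ({(M : Mat d)} : Set (Mat d)) := by
    ext N
    simp [Subtype.ext_iff]
  rw [this]
  exact measurable_subtype_coe (measurableSet_singleton _)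

instance (d : ℕ) : IsProbabilityMeasure (stdGaussianE d) :=
  Measure.isProbabilityMeasure_map (MeasurableEquiv.measurable _).aemeasurable

instance (d : ℕ) : IsProbabilityMeasure (unifSphere d) :=
  Measure.isProbabilityMeasure_map ((measurable_norm.inv.smul measurable_id).aemeasurable)

lemma measurable_quad (d : ℕ) (v : E d) :
    Measurable fun x : E d × PDMat d => quad v (x.2 : Mat d) := by
  unfold quad
  refine Finset.measurable_sum _ fun i _ => Finset.measurable_sum _ fun j _ => ?_
  have hm : Measurable fun x : E d × PDMat d => (x.2 : Mat d) i j :=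
    ((measurable_subtype_coe.comp (measurable_snd (α := E d) (β := PDMat d))).eval (a := i)).eval (a := j)
  exact (measurable_const.mul hm).mul measurable_const

lemma measurable_projSMix (d : ℕ) (w : E 2) (v : E d) : Measurable (projSMix w v) := by
  unfold projSMix
  have h1 : Measurable fun x : E d × PDMat d => (inner ℝ v x.1 : ℝ) :=
    (Continuous.inner continuous_const continuous_id).measurable.comp measurable_fst
  have h2 : Measurable fun x : E d × PDMat d => Real.log (Real.sqrt (quad v (x.2 : Mat d))) :=
    Real.measurable_log.comp (Real.continuous_sqrt.measurable.comp (measurable_quad d v))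
  exact (measurable_const.mul h1).add (measurable_const.mul h2)

lemma measurable_projSMix_param (d : ℕ) (x : E d × PDMat d) :
    Measurable (fun q : E 2 × E d => projSMix q.1 q.2 x) := by
  unfold projSMix
  have h0 : Measurable fun q : E 2 × E d => q.1 0 :=
    (EuclideanSpace.proj (0 : Fin 2)).continuous.measurable.comp measurable_fst
  have h1 : Measurable fun q : E 2 × E d => q.1 1 :=
    (EuclideanSpace.proj (1 : Fin 2)).continuous.measurable.comp measurable_fst
  have h2 : Measurable fun q : E 2 × E d => (inner ℝ q.2 x.1 : ℝ) :=
    (Continuous.inner continuous_id continuous_const).measurable.comp measurable_snd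
  have h3 : Measurable fun q : E 2 × E d => quad q.2 (x.2 : Mat d) := by
    unfold quad
    refine Finset.measurable_sum _ fun i _ => Finset.measurable_sum _ fun j _ => ?_
    have hi : Measurable fun q : E 2 × E d => q.2 i :=
      (EuclideanSpace.proj (i : Fin d)).continuous.measurable.comp measurable_snd
    have hj : Measurable fun q : E 2 × E d => q.2 j :=
      (EuclideanSpace.proj (j : Fin d)).continuous.measurable.comp measurable_snd
    exact (hi.mul measurable_const).mul hj
  have h4 : Measurable fun q : E 2 × E d => Real.log (Real.sqrt (quad q.2 (x.2 : Mat d))) :=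
    Real.measurable_log.comp (Real.continuous_sqrt.measurable.comp h3)
  exact (h0.mul h2).add (h1.mul h4)

end Instances

/-- symmetry, nonnegativity and triangle inequality part of Theorem 2
of the paper: for finitely supported probability measures, `SMix-W_p` is nonnegative,
symmetric, and satisfies the triangle inequality. -/
theorem statement15 (d : ℕ) (hd : 1 ≤ d) (p : ℝ) (hp : 1 ≤ p)
    (G₁ G₂ G₃ : Measure (E d × PDMat d))
    [IsProbabilityMeasure G₁] [IsProbabilityMeasure G₂] [IsProbabilityMeasure G₃]
    (hf₁ : FinSupp G₁) (hf₂ : FinSupp G₂) (hf₃ : FinSupp G₃) :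
    0 ≤ (SMixW d p G₁ G₂) ^ (1 / p) ∧
      SMixW d p G₁ G₂ = SMixW d p G₂ G₁ ∧
      (SMixW d p G₁ G₂) ^ (1 / p) ≤
        (SMixW d p G₁ G₃) ^ (1 / p) + (SMixW d p G₃ G₂) ^ (1 / p) := by
  obtain ⟨s₁, hs₁⟩ := hf₁
  obtain ⟨s₂, hs₂⟩ := hf₂
  obtain ⟨s₃, hs₃⟩ := hf₃
  have hp0 : (0 : ℝ) < p := lt_of_lt_of_le one_pos hp
  have hr0 : (0 : ℝ) < 1 / p := by positivity
  have hcancel : ∀ x : ℝ≥0∞, (x ^ (1 / p)) ^ p = x := fun x => by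
    rw [← ENNReal.rpow_mul, one_div_mul_cancel hp0.ne', ENNReal.rpow_one]
  -- matrix reformulation of the sliced integrand
  have key : ∀ (G G' : Measure (E d × PDMat d)) [IsProbabilityMeasure G]
      [IsProbabilityMeasure G'] (s t : Finset (E d × PDMat d)),
      G (↑s : Set (E d × PDMat d))ᶜ = 0 → G' (↑t : Set (E d × PDMat d))ᶜ = 0 →
      ∀ (w : E 2) (v : E d),
      Wp p (G.map (projSMix w v)) (G'.map (projSMix w v))
        = mW (fun x : ↥s => G {(x : E d × PDMat d)}) (fun y : ↥t => G' {(y : E d × PDMat d)})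
            (mk' p (fun x : ↥s => projSMix w v ↑x) (fun y : ↥t => projSMix w v ↑y)) := by
    intro G G' _ _ s t hs ht w v
    exact Wp_eq_mW G G' hs ht (measurable_projSMix d w v) (measurable_projSMix d w v)
  -- the three matrix-level integrands
  set A₁ : ↥s₁ → ℝ≥0∞ := fun x => G₁ {(x : E d × PDMat d)} with hA₁
  set A₂ : ↥s₂ → ℝ≥0∞ := fun y => G₂ {(y : E d × PDMat d)} with hA₂
  set A₃ : ↥s₃ → ℝ≥0∞ := fun y => G₃ {(y : E d × PDMat d)} with hA₃
  set F12 : E 2 × E d → ℝ≥0∞ := fun q => mW A₁ A₂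
    (mk' p (fun x : ↥s₁ => projSMix q.1 q.2 ↑x) (fun y : ↥s₂ => projSMix q.1 q.2 ↑y)) with hF12
  set F13 : E 2 × E d → ℝ≥0∞ := fun q => mW A₁ A₃
    (mk' p (fun x : ↥s₁ => projSMix q.1 q.2 ↑x) (fun y : ↥s₃ => projSMix q.1 q.2 ↑y)) with hF13
  set F32 : E 2 × E d → ℝ≥0∞ := fun q => mW A₃ A₂
    (mk' p (fun x : ↥s₃ => projSMix q.1 q.2 ↑x) (fun y : ↥s₂ => projSMix q.1 q.2 ↑y)) with hF32
  have hSM12 : SMixW d p G₁ G₂ = ∫⁻ w, ∫⁻ v, F12 (w, v) ∂(unifSphere d) ∂(unifSphere 2) :=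
    lintegral_congr fun w => lintegral_congr fun v => key G₁ G₂ s₁ s₂ hs₁ hs₂ w v
  have hSM13 : SMixW d p G₁ G₃ = ∫⁻ w, ∫⁻ v, F13 (w, v) ∂(unifSphere d) ∂(unifSphere 2) :=
    lintegral_congr fun w => lintegral_congr fun v => key G₁ G₃ s₁ s₃ hs₁ hs₃ w v
  have hSM32 : SMixW d p G₃ G₂ = ∫⁻ w, ∫⁻ v, F32 (w, v) ∂(unifSphere d) ∂(unifSphere 2) :=
    lintegral_congr fun w => lintegral_congr fun v => key G₃ G₂ s₃ s₂ hs₃ hs₂ w v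
  -- measurability of the integrands
  have hMeasmk : ∀ (s t : Finset (E d × PDMat d)) (x : ↥s) (y : ↥t),
      Measurable fun q : E 2 × E d =>
        mk' p (fun x : ↥s => projSMix q.1 q.2 ↑x) (fun y : ↥t => projSMix q.1 q.2 ↑y) x y := by
    intro s t x y
    exact (((measurable_projSMix_param d ↑x).sub
      (measurable_projSMix_param d ↑y)).abs.pow measurable_const).ennreal_ofReal
  have hm12 : Measurable F12 :=
    mW_measurable A₁ A₂ (fun x => measure_ne_top _ _) (hMeasmk s₁ s₂)
  have hm13 : Measurable F13 :=
    mW_measurable A₁ A₃ (fun x => measure_ne_top _ _) (hMeasmk s₁ s₃)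
  have hm32 : Measurable F32 :=
    mW_measurable A₃ A₂ (fun x => measure_ne_top _ _) (hMeasmk s₃ s₂)
  refine ⟨zero_le, ?_, ?_⟩
  · -- symmetry
    rw [SMixW, SMixW]
    refine lintegral_congr fun w => lintegral_congr fun v => ?_
    rw [key G₁ G₂ s₁ s₂ hs₁ hs₂ w v, key G₂ G₁ s₂ s₁ hs₂ hs₁ w v, mW_symm]
    congr 1
    funext y x
    rw [mk', mk', abs_sub_comm]
  · -- triangle inequality
    have htri : ∀ q : E 2 × E d, F12 q ^ (1 / p) ≤ F13 q ^ (1 / p) + F32 q ^ (1 / p) :=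
      fun q => mW_triangle hp A₁ A₂ A₃ (fun y => measure_ne_top _ _) _ _ _
    have hpt : ∀ q : E 2 × E d, F12 q ≤ (F13 q ^ (1 / p) + F32 q ^ (1 / p)) ^ p := fun q => by
      have h := ENNReal.rpow_le_rpow (htri q) hp0.le
      rwa [hcancel] at h
    -- inner Minkowski inequality (in `v`)
    have hinner : ∀ w : E 2,
        (∫⁻ v, F12 (w, v) ∂(unifSphere d)) ^ (1 / p)
          ≤ (∫⁻ v, F13 (w, v) ∂(unifSphere d)) ^ (1 / p)
            + (∫⁻ v, F32 (w, v) ∂(unifSphere d)) ^ (1 / p) := by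
      intro w
      have hf : AEMeasurable (fun v : E d => F13 (w, v) ^ (1 / p)) (unifSphere d) :=
        ((hm13.comp measurable_prodMk_left).pow measurable_const).aemeasurable
      have hg : AEMeasurable (fun v : E d => F32 (w, v) ^ (1 / p)) (unifSphere d) :=
        ((hm32.comp measurable_prodMk_left).pow measurable_const).aemeasurable
      have hmink := ENNReal.lintegral_Lp_add_le hf hg hp
      simp only [Pi.add_apply, hcancel] at hmink
      calc (∫⁻ v, F12 (w, v) ∂(unifSphere d)) ^ (1 / p)
          ≤ (∫⁻ v, (F13 (w, v) ^ (1 / p) + F32 (w, v) ^ (1 / p)) ^ p ∂(unifSphere d)) ^ (1 / p) :=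
            ENNReal.rpow_le_rpow (lintegral_mono fun v => hpt (w, v)) hr0.le
        _ ≤ _ := hmink
    have hIpt : ∀ w : E 2, (∫⁻ v, F12 (w, v) ∂(unifSphere d))
        ≤ ((∫⁻ v, F13 (w, v) ∂(unifSphere d)) ^ (1 / p)
            + (∫⁻ v, F32 (w, v) ∂(unifSphere d)) ^ (1 / p)) ^ p := fun w => by
      have h := ENNReal.rpow_le_rpow (hinner w) hp0.le
      rwa [hcancel] at h
    -- outer Minkowski inequality (in `w`)
    have hm13I : Measurable fun w : E 2 => ∫⁻ v, F13 (w, v) ∂(unifSphere d) :=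
      Measurable.lintegral_prod_right (f := fun w v => F13 (w, v)) hm13
    have hm32I : Measurable fun w : E 2 => ∫⁻ v, F32 (w, v) ∂(unifSphere d) :=
      Measurable.lintegral_prod_right (f := fun w v => F32 (w, v)) hm32
    have hf : AEMeasurable
        (fun w : E 2 => (∫⁻ v, F13 (w, v) ∂(unifSphere d)) ^ (1 / p)) (unifSphere 2) :=
      (hm13I.pow measurable_const).aemeasurable
    have hg : AEMeasurable
        (fun w : E 2 => (∫⁻ v, F32 (w, v) ∂(unifSphere d)) ^ (1 / p)) (unifSphere 2) :=
      (hm32I.pow measurable_const).aemeasurable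
    have hmink := ENNReal.lintegral_Lp_add_le hf hg hp
    simp only [Pi.add_apply, hcancel] at hmink
    calc (SMixW d p G₁ G₂) ^ (1 / p)
        = (∫⁻ w, ∫⁻ v, F12 (w, v) ∂(unifSphere d) ∂(unifSphere 2)) ^ (1 / p) := by rw [hSM12]
      _ ≤ (∫⁻ w, ((∫⁻ v, F13 (w, v) ∂(unifSphere d)) ^ (1 / p)
            + (∫⁻ v, F32 (w, v) ∂(unifSphere d)) ^ (1 / p)) ^ p ∂(unifSphere 2)) ^ (1 / p) :=
          ENNReal.rpow_le_rpow (lintegral_mono fun w => hIpt w) hr0.le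
      _ ≤ (∫⁻ w, ∫⁻ v, F13 (w, v) ∂(unifSphere d) ∂(unifSphere 2)) ^ (1 / p)
            + (∫⁻ w, ∫⁻ v, F32 (w, v) ∂(unifSphere d) ∂(unifSphere 2)) ^ (1 / p) := hmink
      _ = (SMixW d p G₁ G₃) ^ (1 / p) + (SMixW d p G₃ G₂) ^ (1 / p) := by
          rw [hSM13, hSM32]

end PaperSOT
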